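/- Let C_k be a sequence of column-stochastic matrices whose support graphs have β-strongly-connected unions and positive diagonal entries, with all positive entries bounded below by some δ > 0 (e.g., δ = 1/n for the weights c = 1/(1+d^out)). Then the backward products C_{k+T−1}⋯C_{k+1}C_k are entrywise positive for T = (n−1)β, i.e., every such product matrix has all entries strictly positive. -/

import Mathlib

/-!
Fix a target column `j` and call `i` reached at time `t` when the `(i, j)` entry of the product
of the first `t` factors is at least `δ ^ t`. Positive diagonals keep reached indices reached,
and an edge `a → b` at time `t` with `a` reached makes `b` reached at time `t + 1`. Since the
edges of any `β` consecutive steps form a strongly connected graph, some such edge leaves the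
reached set while it is not everything, so every window of `β` steps reaches a new index;
after `(n - 1)` windows all `n` indices are reached.
-/

open Finset Matrix

section Reachability

variable {ι : Type*}

theorem exists_mem_and_succ_notMem {s : Set ι} {p : ℕ → ι} :
    ∀ {m : ℕ}, p 0 ∈ s → p m ∉ s → ∃ i < m, p i ∈ s ∧ p (i + 1) ∉ s
  | 0, h0, hm => absurd h0 hm
  | m + 1, h0, hm => by
    by_cases h : p m ∈ s
    · exact ⟨m, m.lt_succ_self, h, hm⟩
    · obtain ⟨i, hi, hpi, hpi'⟩ := exists_mem_and_succ_notMem h0 h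
      exact ⟨i, by omega, hpi, hpi'⟩

/-- The union of the edge sets `E s` over the window `t ≤ s < t + β` is strongly connected. -/
def WindowStronglyConnected (E : ℕ → ι → ι → Prop) (t β : ℕ) : Prop :=
  ∀ u v : ι, ∃ m : ℕ, ∃ p : ℕ → ι, p 0 = u ∧ p m = v ∧
    ∀ i < m, ∃ s, t ≤ s ∧ s < t + β ∧ E s (p i) (p (i + 1))

theorem WindowStronglyConnected.shift {E : ℕ → ι → ι → Prop} {k t β : ℕ}
    (h : WindowStronglyConnected E (k + t) β) :
    WindowStronglyConnected (fun s => E (k + s)) t β := by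
  intro u v
  obtain ⟨m, p, hp0, hpm, hp⟩ := h u v
  refine ⟨m, p, hp0, hpm, fun i hi => ?_⟩
  obtain ⟨s, hts, hst, hs⟩ := hp i hi
  refine ⟨s - k, by omega, by omega, ?_⟩
  show E (k + (s - k)) _ _
  rwa [Nat.add_sub_cancel' (by omega)]

variable [Fintype ι]

theorem WindowStronglyConnected.card_lt_card_add {E : ℕ → ι → ι → Prop} {S : ℕ → Finset ι}
    (hS : Monotone S) (hstep : ∀ t a b, E t a b → a ∈ S t → b ∈ S (t + 1)) {t β : ℕ}
    (hconn : WindowStronglyConnected E t β) (hne : (S t).Nonempty) (huniv : S t ≠ univ) :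
    #(S t) < #(S (t + β)) := by
  obtain ⟨u, hu⟩ := hne
  obtain ⟨v, hv⟩ : ∃ v, v ∉ S t := by simpa [eq_univ_iff_forall] using huniv
  obtain ⟨m, p, rfl, rfl, hp⟩ := hconn u v
  obtain ⟨i, hi, hpi, hpi'⟩ := exists_mem_and_succ_notMem (s := (S t : Set ι)) (p := p) hu hv
  obtain ⟨s, hts, hst, hs⟩ := hp i hi
  have hreached : p (i + 1) ∈ S (t + β) :=
    hS (show s + 1 ≤ t + β by omega) (hstep s _ _ hs (hS hts hpi))
  exact card_lt_card <| (ssubset_iff_of_subset (hS (Nat.le_add_right t β))).mpr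
    ⟨_, hreached, hpi'⟩

theorem eq_univ_of_monotone_of_card_lt_card_add {S : ℕ → Finset ι} {β : ℕ} (hS : Monotone S)
    (h0 : (S 0).Nonempty)
    (hgrow : ∀ t, (S t).Nonempty → S t ≠ univ → #(S t) < #(S (t + β))) :
    S ((Fintype.card ι - 1) * β) = univ := by
  have hcard : ∀ c, min (Fintype.card ι) (c + 1) ≤ #(S (c * β)) := by
    intro c
    induction c with
    | zero =>
      have := card_pos.mpr h0
      rw [zero_mul]
      omega
    | succ c ih =>
      rw [Nat.succ_mul]
      by_cases h : S (c * β) = univ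
      · have hfull : S (c * β + β) = univ :=
          univ_subset_iff.mp (h ▸ hS (Nat.le_add_right _ β))
        rw [hfull, card_univ]
        omega
      · have := hgrow _ (h0.mono (hS (Nat.zero_le _))) h
        omega
  apply eq_univ_of_card
  have hlower := hcard (Fintype.card ι - 1)
  have hupper := card_le_univ (S ((Fintype.card ι - 1) * β))
  omega

end Reachability

section BackwardProduct

variable {R : Type*} [Semiring R] [PartialOrder R] [IsOrderedRing R]

theorem Matrix.mul_apply_le_mul_apply {ι κ ν : Type*} [Fintype κ] {A : Matrix ι κ R}
    {B : Matrix κ ν R} (hA : ∀ i a, 0 ≤ A i a) (hB : ∀ a j, 0 ≤ B a j) (i : ι) (a : κ) (j : ν) :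
    A i a * B a j ≤ (A * B) i j :=
  single_le_sum (f := fun x => A i x * B x j) (fun x _ => mul_nonneg (hA i x) (hB x j))
    (mem_univ a)

variable {ι : Type*} [Fintype ι] [DecidableEq ι]

/-- `backwardProduct A m = A (m - 1) * ⋯ * A 1 * A 0`. -/
def backwardProduct (A : ℕ → Matrix ι ι R) : ℕ → Matrix ι ι R
  | 0 => 1
  | m + 1 => A m * backwardProduct A m

variable {A : ℕ → Matrix ι ι R}

theorem backwardProduct_nonneg (hA : ∀ m i j, 0 ≤ A m i j) :
    ∀ m i j, 0 ≤ backwardProduct A m i j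
  | 0, i, j => by
    rw [backwardProduct, one_apply]
    split_ifs <;> simp
  | m + 1, i, j =>
    (mul_nonneg (hA m i i) (backwardProduct_nonneg hA m i j)).trans
      (mul_apply_le_mul_apply (hA m) (backwardProduct_nonneg hA m) i i j)

theorem pow_succ_le_backwardProduct_succ (hA : ∀ m i j, 0 ≤ A m i j) {δ : R} (hδ : 0 ≤ δ)
    {t : ℕ} {a b j : ι} (hba : δ ≤ A t b a) (ha : δ ^ t ≤ backwardProduct A t a j) :
    δ ^ (t + 1) ≤ backwardProduct A (t + 1) b j :=
  calc δ ^ (t + 1) = δ * δ ^ t := pow_succ' δ t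
    _ ≤ A t b a * backwardProduct A t a j := mul_le_mul hba ha (pow_nonneg hδ t) (hA t b a)
    _ ≤ backwardProduct A (t + 1) b j :=
      mul_apply_le_mul_apply (hA t) (backwardProduct_nonneg hA t) b a j

theorem pow_le_backwardProduct {E : ℕ → ι → ι → Prop} {δ : R} {β : ℕ} (hδ : 0 ≤ δ)
    (hA : ∀ m i j, 0 ≤ A m i j) (hdiag : ∀ m i, δ ≤ A m i i)
    (hedge : ∀ m i j, E m i j → δ ≤ A m j i) (hconn : ∀ t, WindowStronglyConnected E t β)
    (i j : ι) :
    δ ^ ((Fintype.card ι - 1) * β) ≤ backwardProduct A ((Fintype.card ι - 1) * β) i j := by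
  classical
  set S : ℕ → Finset ι := fun t => {a | δ ^ t ≤ backwardProduct A t a j} with hS
  have hstep : ∀ t a b, δ ≤ A t b a → a ∈ S t → b ∈ S (t + 1) := by
    simp only [hS, mem_filter_univ]
    exact fun t a b hba ha => pow_succ_le_backwardProduct_succ hA hδ hba ha
  have hmono : Monotone S :=
    monotone_nat_of_le_succ fun t a => hstep t a a (hdiag t a)
  have hj : j ∈ S 0 := by simp [hS, backwardProduct]
  have hfull := eq_univ_of_monotone_of_card_lt_card_add hmono ⟨j, hj⟩ fun t =>
    (hconn t).card_lt_card_add hmono fun t a b hab => hstep t a b (hedge t a b hab)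
  have hi : i ∈ S ((Fintype.card ι - 1) * β) := hfull ▸ mem_univ i
  simpa [hS] using hi

end BackwardProduct

theorem backward_product_positive_general (n β : ℕ)
    (C : ℕ → Matrix (Fin n) (Fin n) ℝ)
    (E : ℕ → Fin n → Fin n → Prop)    -- E k j l : edge j → l present at time k
    (δ : ℝ) (hδ : 0 < δ)
    (hnonneg : ∀ k i j, 0 ≤ C k i j)
    (hdiag : ∀ k j, δ ≤ C k j j)
    (hedge : ∀ k j l, E k j l → δ ≤ C k l j)
    (hconn : ∀ t : ℕ, ∀ u v : Fin n, ∃ m : ℕ, ∃ p : ℕ → Fin n, p 0 = u ∧ p m = v ∧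
      ∀ i < m, ∃ s, t ≤ s ∧ s < t + β ∧ E s (p i) (p (i + 1))) :
    ∀ k : ℕ, ∀ P : ℕ → Matrix (Fin n) (Fin n) ℝ,
      P 0 = 1 → (∀ m, P (m + 1) = C (k + m) * P m) →
      ∀ l j : Fin n, δ ^ ((n - 1) * β) ≤ P ((n - 1) * β) l j := by
  intro k P hP0 hP l j
  have hP_eq : P = backwardProduct fun m => C (k + m) := by
    funext m
    induction m with
    | zero => exact hP0
    | succ m ih => rw [hP, ih, backwardProduct]
  have hbound := pow_le_backwardProduct (E := fun s => E (k + s)) hδ.le (fun m => hnonneg (k + m))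
    (fun m => hdiag (k + m)) (fun m => hedge (k + m))
    (fun t => WindowStronglyConnected.shift (hconn (k + t))) l j
  simpa only [hP_eq, Fintype.card_fin] using hbound

/-- Backward products of (n−1)β consecutive column-stochastic matrices with
positive diagonals (≥ δ), edge weights ≥ δ, and β-strongly-connected unions of
support graphs are entrywise positive (entries ≥ δ^((n−1)β)). -/
theorem backward_product_positive (n β : ℕ) (hn : 1 ≤ n) (hβ : 1 ≤ β)
    (C : ℕ → Matrix (Fin n) (Fin n) ℝ)
    (E : ℕ → Fin n → Fin n → Prop)    -- E k j l : edge j → l present at time k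
    (δ : ℝ) (hδ : 0 < δ)
    (hnonneg : ∀ k i j, 0 ≤ C k i j)
    (hcol : ∀ k j, ∑ i, C k i j = 1)
    (hdiag : ∀ k j, δ ≤ C k j j)
    (hedge : ∀ k j l, E k j l → δ ≤ C k l j)
    (hconn : ∀ t : ℕ, ∀ u v : Fin n, ∃ m : ℕ, ∃ p : ℕ → Fin n, p 0 = u ∧ p m = v ∧
      ∀ i < m, ∃ s, t ≤ s ∧ s < t + β ∧ E s (p i) (p (i + 1))) :
    ∀ k : ℕ, ∀ P : ℕ → Matrix (Fin n) (Fin n) ℝ,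
      P 0 = 1 → (∀ m, P (m + 1) = C (k + m) * P m) →
      ∀ l j : Fin n, δ ^ ((n - 1) * β) ≤ P ((n - 1) * β) l j :=
  backward_product_positive_general n β C E δ hδ hnonneg hdiag hedge hconn
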